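/- Let q and q⁽ⁿ⁾ (n ∈ ℕ) be Q-matrices on ℕ such that lim_{n→∞} q⁽ⁿ⁾ i j = q i j for all i, j, and suppose q is regular. Let P⁽ⁿ⁾ be the minimal Q-process for q⁽ⁿ⁾ and P the minimal Q-process for q. Then lim_{n→∞} P⁽ⁿ⁾ t i j = P t i j for all i, j and all t ≥ 0. -/

import Mathlib

open scoped BigOperators
open Filter Topology

/-- Row `i` of `q` with the diagonal entry replaced by `0`
(used to form sums over the off-diagonal entries). -/
noncomputable def offDiag (q : ℕ → ℕ → ℝ) (i j : ℕ) : ℝ :=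
  if j = i then 0 else q i j

/-- `q` is a (totally stable) Q-matrix on `ℕ`: nonnegative off-diagonal entries,
nonpositive diagonal, and each row is summable off the diagonal with
`∑_{j ≠ i} q i j ≤ qᵢ := -q i i`. -/
def IsQMatrix (q : ℕ → ℕ → ℝ) : Prop :=
  (∀ i j, i ≠ j → 0 ≤ q i j) ∧
  (∀ i, q i i ≤ 0) ∧
  (∀ i, Summable (fun j => offDiag q i j)) ∧
  (∀ i, (∑' j, offDiag q i j) ≤ - q i i)

/-- A Q-matrix is conservative if each row sums to `0`:
`∑_{j ≠ i} q i j = qᵢ = -q i i`. -/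
def IsConservative (q : ℕ → ℕ → ℝ) : Prop :=
  ∀ i, (∑' j, offDiag q i j) = - q i i

/-- A Q-matrix is bounded if `sup_i qᵢ < ∞`. -/
def IsBoundedQ (q : ℕ → ℕ → ℝ) : Prop :=
  ∃ C : ℝ, ∀ i, - q i i ≤ C

/-- A substochastic transition function on `[0,∞)` (parametrized by `t : ℝ`,
with all conditions imposed for `t ≥ 0`). -/
def IsTransitionFunction (P : ℝ → ℕ → ℕ → ℝ) : Prop :=
  (∀ t i j, 0 ≤ t → 0 ≤ P t i j) ∧
  (∀ t i, 0 ≤ t → Summable (fun j => P t i j)) ∧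
  (∀ t i, 0 ≤ t → (∑' j, P t i j) ≤ 1) ∧
  (∀ i j, P 0 i j = if i = j then 1 else 0) ∧
  (∀ t s i j, 0 ≤ t → 0 ≤ s → P (t + s) i j = ∑' k, P t i k * P s k j)

/-- `P` satisfies the backward integral equation for the Q-matrix `q`:
`P t i j = δ_{ij} e^{-qᵢ t} + ∫_0^t e^{-qᵢ (t-s)} ∑_{k ≠ i} q i k P s k j ds`
(here `-qᵢ = q i i`). -/
def BackwardEq (q : ℕ → ℕ → ℝ) (P : ℝ → ℕ → ℕ → ℝ) : Prop :=
  ∀ t i j, 0 ≤ t →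
    P t i j = (if i = j then 1 else 0) * Real.exp (q i i * t) +
      ∫ s in (0:ℝ)..t,
        Real.exp (q i i * (t - s)) * (∑' k, if k = i then 0 else q i k * P s k j)

/-- `P` is the minimal Q-process for `q`: a substochastic transition function
satisfying the backward integral equation for `q`, which is pointwise below any
other such transition function. -/
def IsMinimalQProcess (q : ℕ → ℕ → ℝ) (P : ℝ → ℕ → ℕ → ℝ) : Prop :=
  IsTransitionFunction P ∧ BackwardEq q P ∧
  ∀ P', IsTransitionFunction P' → BackwardEq q P' →
    ∀ t i j, 0 ≤ t → P t i j ≤ P' t i j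

/-- `q` is regular (`IsRegularQ` to avoid a name clash with Mathlib): conservative, and the minimal Q-process is honest (stochastic). -/
def IsRegularQ (q : ℕ → ℕ → ℝ) : Prop :=
  IsConservative q ∧
  ∀ P, IsMinimalQProcess q P → ∀ t, 0 ≤ t → ∀ i, (∑' j, P t i j) = 1

/-- The tail sum `∑_{j ≥ k} f j`. -/
noncomputable def tailSum (f : ℕ → ℝ) (k : ℕ) : ℝ :=
  ∑' j, if k ≤ j then f j else 0

/-- Condition (1.1): stochastic comparability of `P1` and `P2`. -/
def Cond11 (P1 P2 : ℝ → ℕ → ℕ → ℝ) : Prop :=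
  ∀ t, 0 ≤ t → ∀ k i m, i ≤ m → tailSum (P1 t i) k ≤ tailSum (P2 t m) k

/-- Condition (1.2) for the Q-matrices `q1`, `q2`. -/
def Cond12 (q1 q2 : ℕ → ℕ → ℝ) : Prop :=
  ∀ i m, i ≤ m → ∀ k, (k ≤ i ∨ m + 1 ≤ k) →
    tailSum (q1 i) k ≤ tailSum (q2 m) k

/-- Condition (1.3) for the Q-matrices `q1`, `q2` (the conservative reduction
of (1.2)). -/
def Cond13 (q1 q2 : ℕ → ℕ → ℝ) : Prop :=
  ∀ i m, i ≤ m →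
    (∀ k, m + 1 ≤ k → tailSum (q1 i) k ≤ tailSum (q2 m) k) ∧
    (∀ k, k + 1 ≤ i →
      (∑ j ∈ Finset.range (k + 1), q2 m j) ≤ ∑ j ∈ Finset.range (k + 1), q1 i j)

/-!
The minimal Q-process is the sum `∑ₘ Gₘ` of the iterates of the backward integral equation,
where `Gₘ` collects the paths with exactly `m` jumps; in `ℝ≥0∞` all rearrangements of these
series are free. Every substochastic solution of the backward equation dominates each partial sum,
and the series is itself a transition function (Chapman–Kolmogorov follows from a convolution
identity for the `Gₘ`), so it *is* the minimal process. Fatou's lemma, applied inductively to the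
partial sums, makes the minimal process lower semicontinuous in `q`: `P t i j ≤ liminf Pⁿ t i j`.
Since `q` is regular, the row `P t i ·` has mass `1`, while the rows of `Pⁿ` have mass at most `1`;
no mass can be gained in the limit, so the lower bound forces convergence.
-/

open MeasureTheory Filter Topology
open scoped ENNReal

namespace ENNReal

variable {ι : Type*} {l : Filter ι}

theorem le_liminf_add {u v : ι → ℝ≥0∞} :
    liminf u l + liminf v l ≤ liminf (u + v) l := by
  rcases eq_or_ne (liminf u l) 0 with hu | hu
  · rw [hu, zero_add]
    exact liminf_le_liminf (.of_forall fun n ↦ le_add_self)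
  rcases eq_or_ne (liminf v l) 0 with hv | hv
  · rw [hv, add_zero]
    exact liminf_le_liminf (.of_forall fun n ↦ le_self_add)
  refine le_of_forall_lt fun c hc ↦ ?_
  obtain ⟨a, ha, b, hb, hc⟩ := ENNReal.exists_lt_add_of_lt_add hc hu hv
  refine hc.trans_le (le_liminf_of_le (by isBoundedDefault) ?_)
  filter_upwards [eventually_lt_of_lt_liminf ha, eventually_lt_of_lt_liminf hb] with n hn hn'
  exact add_le_add hn.le hn'.le

theorem mul_le_liminf_mul_of_tendsto {u v : ι → ℝ≥0∞} {a b : ℝ≥0∞}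
    (hu : Tendsto u l (𝓝 a)) (hv : b ≤ liminf v l) : a * b ≤ liminf (u * v) l := by
  rcases l.eq_or_neBot with rfl | _
  · simp
  rw [← hu.liminf_eq]
  exact (by gcongr : liminf u l * b ≤ _).trans le_liminf_mul

theorem add_le_liminf_add_of_tendsto {u v : ι → ℝ≥0∞} {a b : ℝ≥0∞}
    (hu : Tendsto u l (𝓝 a)) (hv : b ≤ liminf v l) : a + b ≤ liminf (u + v) l := by
  rcases l.eq_or_neBot with rfl | _
  · simp
  rw [← hu.liminf_eq]
  exact (by gcongr : liminf u l + b ≤ _).trans le_liminf_add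

theorem tsum_liminf_le {κ : Type*} [Countable κ] [l.IsCountablyGenerated]
    (x : ι → κ → ℝ≥0∞) : ∑' k, liminf (fun n ↦ x n k) l ≤ liminf (fun n ↦ ∑' k, x n k) l := by
  let _ : MeasurableSpace κ := ⊤
  have := lintegral_liminf_le' (μ := Measure.count) (u := l) (f := x)
    fun _ ↦ Measurable.of_discrete.aemeasurable
  simpa only [lintegral_count] using this

/-- Fatou's lemma on the other coordinates bounds `limsup x n k` by `∑ y - ∑_{k' ≠ k} y = y k`. -/
theorem tendsto_of_le_liminf_of_tsum_le {κ : Type*} [Countable κ] [l.IsCountablyGenerated]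
    {x : ι → κ → ℝ≥0∞} {y : κ → ℝ≥0∞} (hy : ∑' k, y k ≠ ∞)
    (hsum : ∀ n, ∑' k, x n k ≤ ∑' k, y k) (hle : ∀ k, y k ≤ liminf (fun n ↦ x n k) l)
    (k : κ) : Tendsto (fun n ↦ x n k) l (𝓝 (y k)) := by
  classical
  rcases l.eq_or_neBot with rfl | _
  · simp
  set rest : (κ → ℝ≥0∞) → ℝ≥0∞ := fun z ↦ ∑' k', if k' = k then 0 else z k'
  have hrest : rest y ≤ liminf (fun n ↦ rest (x n)) l :=
    (ENNReal.tsum_le_tsum fun k' ↦ by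
      split_ifs
      · exact zero_le
      · exact hle k').trans (tsum_liminf_le _)
  refine tendsto_of_le_liminf_of_limsup_le (hle k) ?_
  calc limsup (fun n ↦ x n k) l ≤ limsup (fun n ↦ (∑' k', y k') - rest (x n)) l :=
        limsup_le_limsup (.of_forall fun n ↦ by
          have hn := (ENNReal.tsum_eq_add_tsum_ite k).symm.le.trans (hsum n)
          exact ENNReal.le_sub_of_add_le_right (ne_top_of_le_ne_top hy (le_add_self.trans hn)) hn)
    _ = (∑' k', y k') - liminf (fun n ↦ rest (x n)) l := ENNReal.limsup_const_sub _ _ hy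
    _ ≤ (∑' k', y k') - rest y := tsub_le_tsub_left hrest _
    _ = y k := by
        rw [ENNReal.tsum_eq_add_tsum_ite k] at hy ⊢
        exact ENNReal.add_sub_cancel_right (ENNReal.add_ne_top.1 hy).2

theorem tsum_mul_tsum_eq_tsum_sum_antidiagonal (f g : ℕ → ℝ≥0∞) :
    (∑' n, f n) * ∑' n, g n = ∑' n, ∑ p ∈ Finset.HasAntidiagonal.antidiagonal n, f p.1 * g p.2 := by
  calc (∑' n, f n) * ∑' n, g n = ∑' p : ℕ × ℕ, f p.1 * g p.2 := by
        rw [ENNReal.tsum_prod (f := fun a b ↦ f a * g b), ← ENNReal.tsum_mul_right]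
        simp_rw [ENNReal.tsum_mul_left]
    _ = _ := by
        rw [← Finset.HasAntidiagonal.sigmaAntidiagonalEquivProd.tsum_eq, ENNReal.tsum_sigma']
        exact tsum_congr fun n ↦ Finset.tsum_subtype _ fun p : ℕ × ℕ ↦ f p.1 * g p.2

end ENNReal

theorem abs_tsum_mul_sub_le {a b : ℕ → ℝ} (ha0 : ∀ k, 0 ≤ a k) (ha : Summable a)
    (ha1 : ∑' k, a k ≤ 1) (hb0 : ∀ k, 0 ≤ b k) (hb1 : ∀ k, b k ≤ 1) (i : ℕ) :
    |∑' k, a k * b k - b i| ≤ 1 - a i := by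
  have hab : Summable fun k ↦ a k * b k :=
    ha.of_nonneg_of_le (fun k ↦ mul_nonneg (ha0 k) (hb0 k))
      fun k ↦ mul_le_of_le_one_right (ha0 k) (hb1 k)
  have hab' : Summable fun k ↦ a k * (1 - b k) := by
    simpa only [mul_sub, mul_one] using ha.sub hab
  have hsplit : ∑' k, a k * b k = ∑' k, a k - ∑' k, a k * (1 - b k) := by
    simp only [mul_sub, mul_one]
    rw [ha.tsum_sub hab, sub_sub_cancel]
  have hlow : a i * b i ≤ ∑' k, a k * b k :=
    hab.le_tsum i fun k _ ↦ mul_nonneg (ha0 k) (hb0 k)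
  have hup : a i * (1 - b i) ≤ ∑' k, a k * (1 - b k) :=
    hab'.le_tsum i fun k _ ↦ mul_nonneg (ha0 k) (sub_nonneg.2 (hb1 k))
  have hai : a i ≤ 1 := (ha.le_tsum i fun k _ ↦ ha0 k).trans ha1
  rw [abs_le]
  constructor <;> nlinarith [ha0 i, hb0 i, hb1 i]

theorem setLIntegral_ofReal_exp_mul_neg {a t : ℝ} (ha : a ≤ 0) (ht : 0 ≤ t) :
    ∫⁻ s in Set.Ioc 0 t, ENNReal.ofReal (Real.exp (a * (t - s))) * ENNReal.ofReal (-a) =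
      ENNReal.ofReal (1 - Real.exp (a * t)) := by
  have hderiv : ∀ s ∈ Set.uIcc 0 t, HasDerivAt (fun s ↦ Real.exp (a * (t - s)))
      (Real.exp (a * (t - s)) * -a) s := fun s _ ↦ by
    simpa using ((hasDerivAt_id s).const_sub t |>.const_mul a).exp
  have hcont : Continuous fun s ↦ Real.exp (a * (t - s)) * -a := by fun_prop
  simp_rw [← ENNReal.ofReal_mul (Real.exp_nonneg _)]
  rw [← ofReal_integral_eq_lintegral_ofReal
      (hcont.integrableOn_Icc.mono_set Set.Ioc_subset_Icc_self)
      (.of_forall fun s ↦ mul_nonneg (Real.exp_nonneg _) (neg_nonneg.2 ha)),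
    ← intervalIntegral.integral_of_le ht,
    intervalIntegral.integral_eq_sub_of_hasDerivAt hderiv (hcont.intervalIntegrable _ _)]
  simp

section QProcess

variable {q : ℕ → ℕ → ℝ}

theorem tsum_ite_mul_eq_tsum_offDiag_mul (q : ℕ → ℕ → ℝ) (i : ℕ) (x : ℕ → ℝ) :
    ∑' k, (if k = i then 0 else q i k * x k) = ∑' k, offDiag q i k * x k :=
  tsum_congr fun k ↦ by by_cases h : k = i <;> simp [offDiag, h]

theorem tendsto_offDiag {qn : ℕ → ℕ → ℕ → ℝ}
    (hconv : ∀ i j, Tendsto (fun n ↦ qn n i j) atTop (𝓝 (q i j))) (i k : ℕ) :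
    Tendsto (fun n ↦ offDiag (qn n) i k) atTop (𝓝 (offDiag q i k)) := by
  by_cases h : k = i
  · simp [offDiag, h]
  · simpa [offDiag, h] using hconv i k

namespace IsQMatrix

variable (hq : IsQMatrix q)
include hq

theorem offDiag_nonneg (i k : ℕ) : 0 ≤ offDiag q i k := by
  by_cases h : k = i
  · simp [offDiag, h]
  · simpa [offDiag, h] using hq.1 i k (Ne.symm h)

theorem exp_le_one {t : ℝ} (ht : 0 ≤ t) (i : ℕ) : Real.exp (q i i * t) ≤ 1 :=
  Real.exp_le_one_iff.2 (mul_nonpos_of_nonpos_of_nonneg (hq.2.1 i) ht)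

theorem tsum_ofReal_offDiag_le (i : ℕ) :
    ∑' k, ENNReal.ofReal (offDiag q i k) ≤ ENNReal.ofReal (-q i i) := by
  rw [← ENNReal.ofReal_tsum_of_nonneg (hq.offDiag_nonneg i) (hq.2.2.1 i)]
  exact ENNReal.ofReal_le_ofReal (hq.2.2.2 i)

theorem tsum_ofReal_offDiag_mul_le (i : ℕ) {x : ℕ → ℝ≥0∞} (hx : ∀ k, x k ≤ 1) :
    ∑' k, ENNReal.ofReal (offDiag q i k) * x k ≤ ENNReal.ofReal (-q i i) :=
  (ENNReal.tsum_le_tsum fun k ↦ mul_le_of_le_one_right' (hx k)).trans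
    (hq.tsum_ofReal_offDiag_le i)

end IsQMatrix

namespace IsTransitionFunction

variable {P : ℝ → ℕ → ℕ → ℝ} (hP : IsTransitionFunction P)
include hP

theorem le_one {t : ℝ} (ht : 0 ≤ t) (i j : ℕ) : P t i j ≤ 1 :=
  ((hP.2.1 t i ht).le_tsum j fun k _ ↦ hP.1 t i k ht).trans (hP.2.2.1 t i ht)

theorem abs_sub_le {t h : ℝ} (ht : 0 ≤ t) (hh : 0 ≤ h) (i j : ℕ) :
    |P (h + t) i j - P t i j| ≤ 1 - P h i i := by
  rw [hP.2.2.2.2 h t i j hh ht]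
  exact abs_tsum_mul_sub_le (fun k ↦ hP.1 h i k hh) (hP.2.1 h i hh) (hP.2.2.1 h i hh)
    (fun k ↦ hP.1 t k j ht) (fun k ↦ hP.le_one ht k j) i

theorem exp_le_of_backwardEq (hq : IsQMatrix q) (hB : BackwardEq q P) {t : ℝ} (ht : 0 ≤ t)
    (i : ℕ) : Real.exp (q i i * t) ≤ P t i i := by
  rw [hB t i i ht, if_pos rfl, one_mul, le_add_iff_nonneg_right]
  refine intervalIntegral.integral_nonneg ht fun s hs ↦ mul_nonneg (Real.exp_nonneg _) ?_
  rw [tsum_ite_mul_eq_tsum_offDiag_mul]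
  exact tsum_nonneg fun k ↦ mul_nonneg (hq.offDiag_nonneg i k) (hP.1 s k i hs.1)

/-- `exp (q i i * h) ≤ P h i i ≤ 1` gives continuity at `0`, which `abs_sub_le` propagates. -/
theorem continuousOn_of_backwardEq (hq : IsQMatrix q) (hB : BackwardEq q P) (i j : ℕ) :
    ContinuousOn (fun t ↦ P t i j) (Set.Ici 0) := by
  intro t₀ ht₀
  have hbound : ∀ t ∈ Set.Ici (0 : ℝ),
      dist (P t i j) (P t₀ i j) ≤ 1 - Real.exp (q i i * |t - t₀|) := by
    intro t ht
    rw [Real.dist_eq]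
    rcases le_total t₀ t with hle | hle
    · have := hP.abs_sub_le (Set.mem_Ici.1 ht₀) (sub_nonneg.2 hle) i j
      rw [sub_add_cancel] at this
      rw [abs_of_nonneg (sub_nonneg.2 hle)]
      linarith [hP.exp_le_of_backwardEq hq hB (sub_nonneg.2 hle) i]
    · have := hP.abs_sub_le (Set.mem_Ici.1 ht) (sub_nonneg.2 hle) i j
      rw [sub_add_cancel] at this
      rw [abs_sub_comm, abs_of_nonpos (sub_nonpos.2 hle), neg_sub]
      linarith [hP.exp_le_of_backwardEq hq hB (sub_nonneg.2 hle) i]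
  have hlim : Tendsto (fun t ↦ 1 - Real.exp (q i i * |t - t₀|)) (𝓝[Set.Ici 0] t₀) (𝓝 0) := by
    have hc : Continuous fun t : ℝ ↦ 1 - Real.exp (q i i * |t - t₀|) := by fun_prop
    simpa using (hc.tendsto t₀).mono_left nhdsWithin_le_nhds
  exact tendsto_iff_dist_tendsto_zero.2 <| squeeze_zero' (.of_forall fun _ ↦ dist_nonneg)
    (eventually_mem_nhdsWithin.mono hbound) hlim

end IsTransitionFunction

/-- The integral operator of the backward equation, applied to one column `f s k` of a matrix;
it is valued in `ℝ≥0∞` so that it commutes with all series. -/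
noncomputable def backwardIntegral (q : ℕ → ℕ → ℝ) (f : ℝ → ℕ → ℝ≥0∞) (t : ℝ) (i : ℕ) : ℝ≥0∞ :=
  ∫⁻ s in Set.Ioc 0 t, ENNReal.ofReal (Real.exp (q i i * (t - s))) *
    ∑' k, ENNReal.ofReal (offDiag q i k) * f s k

section backwardIntegral

variable {f g : ℝ → ℕ → ℝ≥0∞} {t : ℝ} {i : ℕ}

theorem measurable_backwardIntegrand (hf : ∀ k, Measurable fun s ↦ f s k) (t : ℝ) (i : ℕ) :
    Measurable fun s ↦ ENNReal.ofReal (Real.exp (q i i * (t - s))) *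
      ∑' k, ENNReal.ofReal (offDiag q i k) * f s k := by
  fun_prop

theorem measurable_backwardIntegral (hf : ∀ k, Measurable fun s ↦ f s k) (i : ℕ) :
    Measurable fun t ↦ backwardIntegral q f t i := by
  have hF : Measurable fun p : ℝ × ℝ ↦ {p : ℝ × ℝ | p.2 ∈ Set.Ioc 0 p.1}.indicator
      (fun p ↦ ENNReal.ofReal (Real.exp (q i i * (p.1 - p.2))) *
        ∑' k, ENNReal.ofReal (offDiag q i k) * f p.2 k) p := by
    refine Measurable.indicator (by fun_prop) ?_
    exact (measurableSet_lt measurable_const measurable_snd).inter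
      (measurableSet_le measurable_snd measurable_fst)
  convert hF.lintegral_prod_right' (ν := volume) using 2 with t
  rw [backwardIntegral, ← lintegral_indicator measurableSet_Ioc]
  rfl

theorem backwardIntegral_congr (h : ∀ s ∈ Set.Ioc 0 t, ∀ k, f s k = g s k) :
    backwardIntegral q f t i = backwardIntegral q g t i :=
  setLIntegral_congr_fun measurableSet_Ioc fun s hs ↦ by simp only [h s hs]

theorem backwardIntegral_mono (h : ∀ s ∈ Set.Ioc 0 t, ∀ k, f s k ≤ g s k) :
    backwardIntegral q f t i ≤ backwardIntegral q g t i :=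
  setLIntegral_mono' measurableSet_Ioc fun s hs ↦ by
    gcongr with k
    exact h s hs k

theorem backwardIntegral_tsum {ι : Type*} [Countable ι] {f : ι → ℝ → ℕ → ℝ≥0∞}
    (hf : ∀ m k, Measurable fun s ↦ f m s k) :
    backwardIntegral q (fun s k ↦ ∑' m, f m s k) t i = ∑' m, backwardIntegral q (f m) t i := by
  simp only [backwardIntegral]
  rw [← lintegral_tsum fun m ↦ (measurable_backwardIntegrand (hf m) t i).aemeasurable]
  refine lintegral_congr fun s ↦ ?_
  simp_rw [← ENNReal.tsum_mul_left]
  rw [ENNReal.tsum_comm]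

theorem backwardIntegral_finsetSum {ι : Type*} (u : Finset ι) {f : ι → ℝ → ℕ → ℝ≥0∞}
    (hf : ∀ m k, Measurable fun s ↦ f m s k) :
    backwardIntegral q (fun s k ↦ ∑ m ∈ u, f m s k) t i =
      ∑ m ∈ u, backwardIntegral q (f m) t i := by
  simp_rw [← Finset.tsum_subtype u]
  exact backwardIntegral_tsum fun m ↦ hf m

theorem backwardIntegral_mul_const (hf : ∀ k, Measurable fun s ↦ f s k) (c : ℝ≥0∞) :
    backwardIntegral q (fun s k ↦ f s k * c) t i = backwardIntegral q f t i * c := by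
  simp only [backwardIntegral]
  rw [← lintegral_mul_const _ (measurable_backwardIntegrand hf t i)]
  refine lintegral_congr fun s ↦ ?_
  simp_rw [← mul_assoc, ENNReal.tsum_mul_right, mul_assoc]

theorem backwardIntegral_le (hq : IsQMatrix q) (ht : 0 ≤ t)
    (h : ∀ s ∈ Set.Ioc 0 t, ∀ k, f s k ≤ 1) :
    backwardIntegral q f t i ≤ ENNReal.ofReal (1 - Real.exp (q i i * t)) := by
  rw [← setLIntegral_ofReal_exp_mul_neg (hq.2.1 i) ht]
  exact setLIntegral_mono' measurableSet_Ioc fun s hs ↦ by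
    gcongr
    exact hq.tsum_ofReal_offDiag_mul_le i (h s hs)

theorem backwardIntegral_ne_top (hq : IsQMatrix q) (ht : 0 ≤ t)
    (h : ∀ s ∈ Set.Ioc 0 t, ∀ k, f s k ≤ 1) : backwardIntegral q f t i ≠ ∞ :=
  ne_top_of_le_ne_top ENNReal.ofReal_ne_top (backwardIntegral_le hq ht h)

theorem backwardIntegral_add {s : ℝ} (hs : 0 ≤ s) (ht : 0 ≤ t) :
    backwardIntegral q f (t + s) i = ENNReal.ofReal (Real.exp (q i i * t)) *
      backwardIntegral q f s i + backwardIntegral q (fun r k ↦ f (r + s) k) t i := by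
  set K : ℝ → ℝ≥0∞ := fun r ↦ ∑' k, ENNReal.ofReal (offDiag q i k) * f r k
  have hfirst : ∫⁻ r in Set.Ioc 0 s, ENNReal.ofReal (Real.exp (q i i * (t + s - r))) * K r =
      ENNReal.ofReal (Real.exp (q i i * t)) * backwardIntegral q f s i := by
    rw [backwardIntegral, ← lintegral_const_mul' _ _ ENNReal.ofReal_ne_top]
    refine lintegral_congr fun r ↦ ?_
    rw [← mul_assoc, ← ENNReal.ofReal_mul (Real.exp_nonneg _), ← Real.exp_add]
    congr 3
    ring
  have hsecond : ∫⁻ r in Set.Ioc s (t + s), ENNReal.ofReal (Real.exp (q i i * (t + s - r))) * K r =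
      backwardIntegral q (fun r k ↦ f (r + s) k) t i := by
    rw [← (measurePreserving_add_right volume s).setLIntegral_comp_preimage_emb
      (measurableEmbedding_addRight s), Set.preimage_add_const_Ioc, sub_self, add_sub_cancel_right,
      backwardIntegral]
    simp_rw [K, add_sub_add_right_eq_sub]
  rw [backwardIntegral, ← Set.Ioc_union_Ioc_eq_Ioc hs (le_add_of_nonneg_left ht),
    lintegral_union measurableSet_Ioc (Set.Ioc_disjoint_Ioc_of_le le_rfl), hfirst, hsecond]

theorem backwardIntegral_le_liminf {qn : ℕ → ℕ → ℕ → ℝ}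
    (hconv : ∀ i j, Tendsto (fun n ↦ qn n i j) atTop (𝓝 (q i j)))
    {fn : ℕ → ℝ → ℕ → ℝ≥0∞} (hfn : ∀ n k, Measurable fun s ↦ fn n s k)
    (hf : ∀ s ∈ Set.Ioc 0 t, ∀ k, f s k ≤ liminf (fun n ↦ fn n s k) atTop) :
    backwardIntegral q f t i ≤ liminf (fun n ↦ backwardIntegral (qn n) (fn n) t i) atTop := by
  refine (setLIntegral_mono' measurableSet_Ioc fun s hs ↦ ?_).trans
    (lintegral_liminf_le' fun n ↦ (measurable_backwardIntegrand (hfn n) t i).aemeasurable)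
  refine ENNReal.mul_le_liminf_mul_of_tendsto
    (ENNReal.tendsto_ofReal (((hconv i i).mul_const _).rexp)) ?_
  exact (ENNReal.tsum_le_tsum fun k ↦ ENNReal.mul_le_liminf_mul_of_tendsto
    (ENNReal.tendsto_ofReal (tendsto_offDiag hconv i k)) (hf s hs k)).trans
    (ENNReal.tsum_liminf_le _)

theorem intervalIntegral_eq_toReal_backwardIntegral (hq : IsQMatrix q) (ht : 0 ≤ t)
    {f : ℝ → ℕ → ℝ} (hf : ∀ k, AEMeasurable (fun s ↦ f s k) (volume.restrict (Set.Ioc 0 t)))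
    (h0 : ∀ s ∈ Set.Ioc 0 t, ∀ k, 0 ≤ f s k) (h1 : ∀ s ∈ Set.Ioc 0 t, ∀ k, f s k ≤ 1) :
    ∫ s in (0 : ℝ)..t, Real.exp (q i i * (t - s)) * ∑' k, offDiag q i k * f s k =
      (backwardIntegral q (fun s k ↦ ENNReal.ofReal (f s k)) t i).toReal := by
  set F : ℝ → ℝ≥0∞ := fun s ↦ ENNReal.ofReal (Real.exp (q i i * (t - s))) *
    ∑' k, ENNReal.ofReal (offDiag q i k) * ENNReal.ofReal (f s k)
  have hF : AEMeasurable F (volume.restrict (Set.Ioc 0 t)) := by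
    refine (by fun_prop : Measurable fun s ↦ ENNReal.ofReal (Real.exp (q i i * (t - s))))
      |>.aemeasurable.mul (AEMeasurable.tsum fun k ↦ ?_)
    exact (ENNReal.measurable_ofReal.comp_aemeasurable (hf k)).const_mul _
  have hFfin : ∀ s ∈ Set.Ioc 0 t, F s < ∞ := fun s hs ↦
    ENNReal.mul_lt_top ENNReal.ofReal_lt_top <| (hq.tsum_ofReal_offDiag_mul_le i fun k ↦
      ENNReal.ofReal_le_one.2 (h1 s hs k)).trans_lt ENNReal.ofReal_lt_top
  have hpt : ∀ s ∈ Set.Ioc 0 t,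
      Real.exp (q i i * (t - s)) * ∑' k, offDiag q i k * f s k = (F s).toReal := fun s hs ↦ by
    simp only [F, ENNReal.toReal_mul, ENNReal.toReal_ofReal (Real.exp_nonneg _),
      ENNReal.tsum_toReal_eq fun k ↦ ENNReal.mul_ne_top ENNReal.ofReal_ne_top ENNReal.ofReal_ne_top,
      ENNReal.toReal_ofReal (hq.offDiag_nonneg i _), ENNReal.toReal_ofReal (h0 s hs _)]
  rw [intervalIntegral.integral_of_le ht, setIntegral_congr_fun measurableSet_Ioc hpt,
    integral_toReal hF ((ae_restrict_iff' measurableSet_Ioc).2 (.of_forall hFfin))]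
  rfl

end backwardIntegral

/-- The contribution of the paths with exactly `m` jumps to the minimal solution. -/
noncomputable def backwardIterate (q : ℕ → ℕ → ℝ) : ℕ → ℝ → ℕ → ℕ → ℝ≥0∞
  | 0 => fun t i j ↦ if i = j then ENNReal.ofReal (Real.exp (q i i * t)) else 0
  | m + 1 => fun t i j ↦ backwardIntegral q (fun s k ↦ backwardIterate q m s k j) t i

noncomputable def minimalSolution (q : ℕ → ℕ → ℝ) (t : ℝ) (i j : ℕ) : ℝ≥0∞ :=
  ∑' m, backwardIterate q m t i j

section minimalSolution

variable {t : ℝ} {i j : ℕ}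

theorem backwardIterate_zero_eq_ofReal :
    backwardIterate q 0 t i j =
      ENNReal.ofReal ((if i = j then 1 else 0) * Real.exp (q i i * t)) := by
  by_cases h : i = j <;> simp [backwardIterate, h]

theorem measurable_backwardIterate (q : ℕ → ℕ → ℝ) (m i j : ℕ) :
    Measurable fun t ↦ backwardIterate q m t i j := by
  induction m generalizing i with
  | zero => by_cases h : i = j <;> simp only [backwardIterate, h, if_true, if_false] <;> fun_prop
  | succ m ih => exact measurable_backwardIntegral (fun k ↦ ih k) i

theorem sum_range_succ_backwardIterate (M : ℕ) :
    ∑ m ∈ Finset.range (M + 1), backwardIterate q m t i j = backwardIterate q 0 t i j +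
      backwardIntegral q (fun s k ↦ ∑ m ∈ Finset.range M, backwardIterate q m s k j) t i := by
  rw [Finset.sum_range_succ', add_comm,
    backwardIntegral_finsetSum _ fun m k ↦ measurable_backwardIterate q m k j]
  rfl

theorem minimalSolution_eq (q : ℕ → ℕ → ℝ) (t : ℝ) (i j : ℕ) :
    minimalSolution q t i j = backwardIterate q 0 t i j +
      backwardIntegral q (fun s k ↦ minimalSolution q s k j) t i := by
  simp only [minimalSolution]
  rw [tsum_eq_zero_add' ENNReal.summable,
    backwardIntegral_tsum fun m k ↦ measurable_backwardIterate q m k j]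
  rfl

theorem minimalSolution_eq_iSup (q : ℕ → ℕ → ℝ) (t : ℝ) (i j : ℕ) :
    minimalSolution q t i j = ⨆ M, ∑ m ∈ Finset.range M, backwardIterate q m t i j :=
  ENNReal.tsum_eq_iSup_nat

theorem minimalSolution_zero (i j : ℕ) : minimalSolution q 0 i j = if i = j then 1 else 0 := by
  rw [minimalSolution_eq, backwardIntegral, Set.Ioc_self, Measure.restrict_empty,
    lintegral_zero_measure, add_zero]
  by_cases h : i = j <;> simp [backwardIterate, h]

theorem tsum_sum_range_backwardIterate_le_one (hq : IsQMatrix q) (M : ℕ) (ht : 0 ≤ t) (i : ℕ) :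
    ∑' j, ∑ m ∈ Finset.range M, backwardIterate q m t i j ≤ 1 := by
  induction M generalizing t i with
  | zero => simp
  | succ M ih =>
    simp_rw [sum_range_succ_backwardIterate]
    rw [ENNReal.tsum_add, ← backwardIntegral_tsum fun j k ↦
      Finset.measurable_sum _ fun m _ ↦ measurable_backwardIterate q m k j]
    calc ∑' j, backwardIterate q 0 t i j + backwardIntegral q _ t i
        ≤ ENNReal.ofReal (Real.exp (q i i * t)) + ENNReal.ofReal (1 - Real.exp (q i i * t)) := by
          gcongr
          · simp [backwardIterate]
          · exact backwardIntegral_le hq ht fun s hs k ↦ ih hs.1.le k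
      _ = 1 := by
          rw [← ENNReal.ofReal_add (Real.exp_nonneg _) (sub_nonneg.2 (hq.exp_le_one ht i))]
          simp

theorem tsum_minimalSolution_le_one (hq : IsQMatrix q) (ht : 0 ≤ t) (i : ℕ) :
    ∑' j, minimalSolution q t i j ≤ 1 := by
  simp only [minimalSolution]
  rw [ENNReal.tsum_comm, ENNReal.tsum_eq_iSup_nat]
  refine iSup_le fun M ↦ ?_
  rw [← Summable.tsum_finsetSum fun _ _ ↦ ENNReal.summable]
  exact tsum_sum_range_backwardIterate_le_one hq M ht i

theorem minimalSolution_le_one (hq : IsQMatrix q) (ht : 0 ≤ t) (i j : ℕ) :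
    minimalSolution q t i j ≤ 1 :=
  (ENNReal.le_tsum j).trans (tsum_minimalSolution_le_one hq ht i)

theorem minimalSolution_ne_top (hq : IsQMatrix q) (ht : 0 ≤ t) (i j : ℕ) :
    minimalSolution q t i j ≠ ∞ :=
  ne_top_of_le_ne_top ENNReal.one_ne_top (minimalSolution_le_one hq ht i j)

end minimalSolution

section ChapmanKolmogorov

variable {t s : ℝ}

theorem backwardIterate_add (q : ℕ → ℕ → ℝ) (m : ℕ) (ht : 0 ≤ t) (hs : 0 ≤ s) (i j : ℕ) :
    backwardIterate q m (t + s) i j = ∑' l, ∑ p ∈ Finset.HasAntidiagonal.antidiagonal m,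
      backwardIterate q p.1 t i l * backwardIterate q p.2 s l j := by
  induction m generalizing t i with
  | zero =>
    rw [tsum_eq_single i fun l hl ↦ by simp [backwardIterate, Ne.symm hl]]
    by_cases h : i = j
    · subst h
      simp [backwardIterate, mul_add, Real.exp_add, ENNReal.ofReal_mul (Real.exp_nonneg _)]
    · simp [backwardIterate, h]
  | succ m ih =>
    have hfirst : ENNReal.ofReal (Real.exp (q i i * t)) *
        backwardIntegral q (fun r k ↦ backwardIterate q m r k j) s i =
        ∑' l, backwardIterate q 0 t i l * backwardIterate q (m + 1) s l j := by
      rw [tsum_eq_single i fun l hl ↦ by simp [backwardIterate, Ne.symm hl]]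
      simp [backwardIterate]
    have hmeas : ∀ l (p : ℕ × ℕ) k, Measurable fun r ↦
        backwardIterate q p.1 r k l * backwardIterate q p.2 s l j := fun l p k ↦
      (measurable_backwardIterate q p.1 k l).mul_const _
    change backwardIntegral q (fun r k ↦ backwardIterate q m r k j) (t + s) i = _
    rw [backwardIntegral_add hs ht, hfirst, backwardIntegral_congr fun r hr k ↦ ih hr.1.le k,
      backwardIntegral_tsum fun l k ↦ Finset.measurable_sum _ fun p _ ↦ hmeas l p k,
      ← ENNReal.tsum_add]
    refine tsum_congr fun l ↦ ?_
    rw [Finset.Nat.sum_antidiagonal_succ, backwardIntegral_finsetSum _ fun p k ↦ hmeas l p k]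
    congr 1
    refine Finset.sum_congr rfl fun p _ ↦ ?_
    exact backwardIntegral_mul_const (fun k ↦ measurable_backwardIterate q p.1 k l) _

theorem minimalSolution_add (q : ℕ → ℕ → ℝ) (ht : 0 ≤ t) (hs : 0 ≤ s) (i j : ℕ) :
    minimalSolution q (t + s) i j = ∑' l, minimalSolution q t i l * minimalSolution q s l j := by
  simp only [minimalSolution, backwardIterate_add q _ ht hs]
  rw [ENNReal.tsum_comm]
  exact tsum_congr fun l ↦ (ENNReal.tsum_mul_tsum_eq_tsum_sum_antidiagonal
    (fun m ↦ backwardIterate q m t i l) (fun m ↦ backwardIterate q m s l j)).symm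

end ChapmanKolmogorov

section Comparison

variable {t : ℝ} {i j : ℕ}

theorem measurable_minimalSolution (q : ℕ → ℕ → ℝ) (i j : ℕ) :
    Measurable fun t ↦ minimalSolution q t i j :=
  Measurable.tsum fun m ↦ measurable_backwardIterate q m i j

theorem sum_range_backwardIterate_le_ofReal (hq : IsQMatrix q) {P : ℝ → ℕ → ℕ → ℝ}
    (hP : IsTransitionFunction P) (hB : BackwardEq q P) (M : ℕ) (ht : 0 ≤ t) (i j : ℕ) :
    ∑ m ∈ Finset.range M, backwardIterate q m t i j ≤ ENNReal.ofReal (P t i j) := by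
  induction M generalizing t i with
  | zero => simp
  | succ M ih =>
    have hmeas : ∀ k, AEMeasurable (fun s ↦ P s k j) (volume.restrict (Set.Ioc 0 t)) := fun k ↦
      ((hP.continuousOn_of_backwardEq hq hB k j).mono fun s hs ↦ hs.1.le).aemeasurable
        measurableSet_Ioc
    have h1 : ∀ s ∈ Set.Ioc 0 t, ∀ k, P s k j ≤ 1 := fun s hs k ↦ hP.le_one hs.1.le k j
    have hδ : 0 ≤ (if i = j then 1 else 0) * Real.exp (q i i * t) :=
      mul_nonneg (by split_ifs <;> norm_num) (Real.exp_nonneg _)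
    rw [sum_range_succ_backwardIterate, hB t i j ht]
    simp_rw [tsum_ite_mul_eq_tsum_offDiag_mul]
    rw [intervalIntegral_eq_toReal_backwardIntegral hq ht hmeas
        (fun s hs k ↦ hP.1 s k j hs.1.le) h1,
      ENNReal.ofReal_add hδ ENNReal.toReal_nonneg, ENNReal.ofReal_toReal
        (backwardIntegral_ne_top hq ht fun s hs k ↦ ENNReal.ofReal_le_one.2 (h1 s hs k)),
      ← backwardIterate_zero_eq_ofReal]
    gcongr
    exact backwardIntegral_mono fun s hs k ↦ ih hs.1.le k

theorem minimalSolution_le_ofReal (hq : IsQMatrix q) {P : ℝ → ℕ → ℕ → ℝ}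
    (hP : IsTransitionFunction P) (hB : BackwardEq q P) (ht : 0 ≤ t) (i j : ℕ) :
    minimalSolution q t i j ≤ ENNReal.ofReal (P t i j) := by
  rw [minimalSolution_eq_iSup]
  exact iSup_le fun M ↦ sum_range_backwardIterate_le_ofReal hq hP hB M ht i j

theorem sum_range_backwardIterate_le_liminf {qn : ℕ → ℕ → ℕ → ℝ}
    (hconv : ∀ i j, Tendsto (fun n ↦ qn n i j) atTop (𝓝 (q i j))) (M : ℕ) (t : ℝ) (i j : ℕ) :
    ∑ m ∈ Finset.range M, backwardIterate q m t i j ≤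
      liminf (fun n ↦ ∑ m ∈ Finset.range M, backwardIterate (qn n) m t i j) atTop := by
  induction M generalizing t i with
  | zero => simp
  | succ M ih =>
    simp_rw [sum_range_succ_backwardIterate]
    refine ENNReal.add_le_liminf_add_of_tendsto ?_ (backwardIntegral_le_liminf hconv
      (fun n k ↦ Finset.measurable_sum _ fun m _ ↦ measurable_backwardIterate _ m k j)
      fun s _ k ↦ ih s k)
    by_cases h : i = j
    · simpa [backwardIterate, h] using ENNReal.tendsto_ofReal ((hconv j j).mul_const t).rexp
    · simp [backwardIterate, h]

theorem minimalSolution_le_liminf {qn : ℕ → ℕ → ℕ → ℝ}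
    (hconv : ∀ i j, Tendsto (fun n ↦ qn n i j) atTop (𝓝 (q i j))) (t : ℝ) (i j : ℕ) :
    minimalSolution q t i j ≤ liminf (fun n ↦ minimalSolution (qn n) t i j) atTop := by
  rw [minimalSolution_eq_iSup]
  exact iSup_le fun M ↦ (sum_range_backwardIterate_le_liminf hconv M t i j).trans <|
    liminf_le_liminf (.of_forall fun n ↦ ENNReal.sum_le_tsum _)

end Comparison

noncomputable def minimalProcess (q : ℕ → ℕ → ℝ) (t : ℝ) (i j : ℕ) : ℝ :=
  (minimalSolution q t i j).toReal

section minimalProcess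

variable {t : ℝ} {i j : ℕ}

theorem ofReal_minimalProcess (hq : IsQMatrix q) (ht : 0 ≤ t) (i j : ℕ) :
    ENNReal.ofReal (minimalProcess q t i j) = minimalSolution q t i j :=
  ENNReal.ofReal_toReal (minimalSolution_ne_top hq ht i j)

theorem minimalProcess_le_one (hq : IsQMatrix q) (ht : 0 ≤ t) (i j : ℕ) :
    minimalProcess q t i j ≤ 1 :=
  ENNReal.toReal_le_of_le_ofReal zero_le_one (by simpa using minimalSolution_le_one hq ht i j)

theorem isTransitionFunction_minimalProcess (hq : IsQMatrix q) :
    IsTransitionFunction (minimalProcess q) := by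
  refine ⟨fun t i j _ ↦ ENNReal.toReal_nonneg, fun t i ht ↦ ?_, fun t i ht ↦ ?_, fun i j ↦ ?_,
    fun t s i j ht hs ↦ ?_⟩
  · exact ENNReal.summable_toReal
      (ne_top_of_le_ne_top ENNReal.one_ne_top (tsum_minimalSolution_le_one hq ht i))
  · simp only [minimalProcess]
    rw [← ENNReal.tsum_toReal_eq fun j ↦ minimalSolution_ne_top hq ht i j]
    exact ENNReal.toReal_le_of_le_ofReal zero_le_one
      (by simpa using tsum_minimalSolution_le_one hq ht i)
  · by_cases h : i = j <;> simp [minimalProcess, minimalSolution_zero, h]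
  · rw [minimalProcess, minimalSolution_add q ht hs, ENNReal.tsum_toReal_eq fun l ↦
      ENNReal.mul_ne_top (minimalSolution_ne_top hq ht i l) (minimalSolution_ne_top hq hs l j)]
    simp [minimalProcess, ENNReal.toReal_mul]

theorem backwardEq_minimalProcess (hq : IsQMatrix q) : BackwardEq q (minimalProcess q) := by
  intro t i j ht
  simp_rw [tsum_ite_mul_eq_tsum_offDiag_mul]
  rw [intervalIntegral_eq_toReal_backwardIntegral (f := fun s k ↦ minimalProcess q s k j) hq ht
      (fun k ↦ (measurable_minimalSolution q k j).ennreal_toReal.aemeasurable)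
      (fun s _ k ↦ ENNReal.toReal_nonneg) fun s hs k ↦ minimalProcess_le_one hq hs.1.le k j,
    backwardIntegral_congr fun s hs k ↦ ofReal_minimalProcess hq hs.1.le k j, minimalProcess,
    minimalSolution_eq, ENNReal.toReal_add (by simp [backwardIterate_zero_eq_ofReal])
      (backwardIntegral_ne_top hq ht fun s hs k ↦ minimalSolution_le_one hq hs.1.le k j),
    backwardIterate_zero_eq_ofReal,
    ENNReal.toReal_ofReal (mul_nonneg (by split_ifs <;> norm_num) (Real.exp_nonneg _))]

theorem IsMinimalQProcess.ofReal_le_minimalSolution (hq : IsQMatrix q) {P : ℝ → ℕ → ℕ → ℝ}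
    (hP : IsMinimalQProcess q P) (ht : 0 ≤ t) (i j : ℕ) :
    ENNReal.ofReal (P t i j) ≤ minimalSolution q t i j := by
  rw [← ofReal_minimalProcess hq ht]
  exact ENNReal.ofReal_le_ofReal (hP.2.2 _ (isTransitionFunction_minimalProcess hq)
    (backwardEq_minimalProcess hq) t i j ht)

end minimalProcess

end QProcess

/-- if `qn n → q` entrywise and `q` is regular, then
`Pn n t i j → P t i j` for the minimal processes. -/
theorem statement10 (q : ℕ → ℕ → ℝ) (hq : IsQMatrix q) (hreg : IsRegularQ q)
    (qn : ℕ → ℕ → ℕ → ℝ) (hqnQ : ∀ n, IsQMatrix (qn n))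
    (hconv : ∀ i j : ℕ,
      Filter.Tendsto (fun n => qn n i j) Filter.atTop (nhds (q i j)))
    (Pn : ℕ → ℝ → ℕ → ℕ → ℝ) (P : ℝ → ℕ → ℕ → ℝ)
    (hPn : ∀ n, IsMinimalQProcess (qn n) (Pn n))
    (hP : IsMinimalQProcess q P) :
    ∀ t : ℝ, 0 ≤ t → ∀ i j : ℕ,
      Filter.Tendsto (fun n => Pn n t i j) Filter.atTop (nhds (P t i j)) := by
  intro t ht i j
  have hlow : ∀ k, ENNReal.ofReal (P t i k) ≤ liminf (fun n ↦ ENNReal.ofReal (Pn n t i k)) atTop :=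
    fun k ↦ (hP.ofReal_le_minimalSolution hq ht i k).trans <|
      (minimalSolution_le_liminf hconv t i k).trans <| liminf_le_liminf <| .of_forall fun n ↦
        minimalSolution_le_ofReal (hqnQ n) (hPn n).1 (hPn n).2.1 ht i k
  have hmass : ∑' k, ENNReal.ofReal (P t i k) = 1 := by
    rw [← ENNReal.ofReal_tsum_of_nonneg (fun k ↦ hP.1.1 t i k ht) (hP.1.2.1 t i ht),
      hreg.2 P hP t ht i, ENNReal.ofReal_one]
  have hmass_le : ∀ n, ∑' k, ENNReal.ofReal (Pn n t i k) ≤ ∑' k, ENNReal.ofReal (P t i k) := by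
    intro n
    rw [hmass, ← ENNReal.ofReal_tsum_of_nonneg (fun k ↦ (hPn n).1.1 t i k ht)
      ((hPn n).1.2.1 t i ht)]
    exact ENNReal.ofReal_le_one.2 ((hPn n).1.2.2.1 t i ht)
  have hlim := ENNReal.tendsto_of_le_liminf_of_tsum_le (by simp [hmass]) hmass_le hlow j
  simpa [Function.comp_def, ENNReal.toReal_ofReal, (hPn _).1.1 t i j ht, hP.1.1 t i j ht] using
    (ENNReal.tendsto_toReal ENNReal.ofReal_ne_top).comp hlim
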